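/- Let G be a self-contained graph and H a removable subgraph of G whose torsion Tor_G(H) is nonempty. Then the foundation Fnd(G) is itself a self-contained graph, and it has a removable subgraph isomorphic to Tor_G(H). -/
import Mathlib

open SimpleGraph Function Set

/-- `s` is the vertex set of a removable subgraph of `G`: it is nonempty, proper,
and deleting it yields a graph isomorphic to `G`. -/
def IsRemovable {V : Type*} (G : SimpleGraph V) (s : Set V) : Prop :=
  s.Nonempty ∧ s ≠ Set.univ ∧ Nonempty (G ≃g (G.induce sᶜ))

/-- `G` is self-contained: isomorphic to a proper induced subgraph of itself. -/
def SelfContained {V : Type*} (G : SimpleGraph V) : Prop :=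
  ∃ t : Set V, t ≠ Set.univ ∧ Nonempty (G ≃g G.induce t)

/-- The vertex set of the foundation of `G`: vertices in no removable subgraph. -/
def FndSet {V : Type*} (G : SimpleGraph V) : Set V :=
  {v | ∀ s : Set V, IsRemovable G s → v ∉ s}

/-- The set of twisted vertices for a removable vertex set `h`. -/
def TorSet {V : Type*} (G : SimpleGraph V) (h : Set V) : Set V :=
  {v | (∃ s, IsRemovable G s ∧ v ∈ s) ∧
    ∃ hv : v ∈ hᶜ, (⟨v, hv⟩ : ↥hᶜ) ∈ FndSet (G.induce hᶜ)}

noncomputable section AuxStmt11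

variable {V W : Type*}

/-- Induce twice is induce on the image set. -/
noncomputable def induceInduceIso (G : SimpleGraph V) (A : Set V) (B : Set ↥A) :
    (G.induce A).induce B ≃g G.induce (Subtype.val '' B) where
  toEquiv := Equiv.Set.image Subtype.val B Subtype.val_injective
  map_rel_iff' := by
    rintro ⟨a, ha⟩ ⟨b, hb⟩
    simp [Equiv.Set.image, Equiv.Set.imageOfInjOn]

/-- Transport an induced subgraph along an isomorphism. -/
noncomputable def induceMapIso {G : SimpleGraph V} {G' : SimpleGraph W} (e : G ≃g G')
    (s : Set V) : G.induce s ≃g G'.induce (⇑e '' s) where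
  toEquiv := Equiv.Set.image ⇑e s (RelIso.injective e)
  map_rel_iff' := by
    rintro ⟨a, ha⟩ ⟨b, hb⟩
    simp [Equiv.Set.image, Equiv.Set.imageOfInjOn, e.map_adj_iff]

lemma isRemovable_map {G : SimpleGraph V} {G' : SimpleGraph W} (e : G ≃g G')
    {s : Set V} (hs : IsRemovable G s) : IsRemovable G' (⇑e '' s) := by
  obtain ⟨hne, hproper, ⟨i⟩⟩ := hs
  refine ⟨hne.image _, ?_, ?_⟩
  · intro hcontra
    obtain ⟨v, hv⟩ := (Set.ne_univ_iff_exists_notMem s).mp hproper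
    have : e v ∈ ⇑e '' s := hcontra ▸ Set.mem_univ _
    obtain ⟨w, hw, hwe⟩ := this
    exact hv ((RelIso.injective e hwe) ▸ hw)
  · have him : ⇑e '' sᶜ = (⇑e '' s)ᶜ := Set.image_compl_eq (RelIso.bijective e)
    exact ⟨(e.symm.trans i).trans (him ▸ induceMapIso e sᶜ)⟩

lemma mem_fndSet_iff {G : SimpleGraph V} {G' : SimpleGraph W} (e : G ≃g G') (v : V) :
    v ∈ FndSet G ↔ e v ∈ FndSet G' := by
  constructor
  · intro hv s' hs' hmem
    refine hv _ (isRemovable_map e.symm hs') ⟨e v, hmem, e.symm_apply_apply v⟩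
  · intro hv s hs hmem
    exact hv _ (isRemovable_map e hs) ⟨v, hmem, rfl⟩

lemma removable_union {G : SimpleGraph V} {h : Set V} (hh : IsRemovable G h)
    {s : Set ↥hᶜ} (hs : IsRemovable (G.induce hᶜ) s) :
    IsRemovable G (h ∪ Subtype.val '' s) := by
  obtain ⟨hne, hproper, ⟨i⟩⟩ := hs
  obtain ⟨-, -, ⟨f⟩⟩ := hh
  have hset : Subtype.val '' sᶜ = (h ∪ Subtype.val '' s)ᶜ := by
    ext v
    simp only [Set.mem_image, Set.mem_compl_iff, Set.mem_union, not_or]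
    constructor
    · rintro ⟨⟨w, hw⟩, hws, rfl⟩
      refine ⟨hw, ?_⟩
      rintro ⟨⟨u, hu⟩, hus, huv⟩
      exact hws (by cases Subtype.ext huv; exact hus)
    · rintro ⟨hvh, hvs⟩
      exact ⟨⟨v, hvh⟩, fun hc => hvs ⟨⟨v, hvh⟩, hc, rfl⟩, rfl⟩
  refine ⟨?_, ?_, ?_⟩
  · obtain ⟨x, hx⟩ := hne
    exact ⟨x, Or.inr ⟨x, hx, rfl⟩⟩
  · intro hcontra
    obtain ⟨w, hw⟩ := (Set.ne_univ_iff_exists_notMem s).mp hproper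
    have : (w : V) ∈ (h ∪ Subtype.val '' s)ᶜ := hset ▸ ⟨w, hw, rfl⟩
    exact this (hcontra ▸ Set.mem_univ _)
  · exact ⟨(f.trans i).trans (hset ▸ induceInduceIso G hᶜ sᶜ)⟩

end AuxStmt11

theorem stmt11 {V : Type*} (G : SimpleGraph V) (hG : SelfContained G)
    (h : Set V) (hh : IsRemovable G h) (ht : (TorSet G h).Nonempty) :
    SelfContained (G.induce (FndSet G)) ∧
      ∃ s : Set ↥(FndSet G), IsRemovable (G.induce (FndSet G)) s ∧
        Nonempty (((G.induce (FndSet G)).induce s) ≃g (G.induce (TorSet G h))) := by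
  classical
  obtain ⟨f⟩ := hh.2.2
  set F := FndSet G with hF
  set T := TorSet G h with hT
  -- disjointness
  have hdisj : ∀ v, v ∈ T → v ∉ F := by
    rintro v ⟨⟨s, hs, hvs⟩, -⟩ hvF
    exact hvF s hs hvs
  -- F in complement coords is in FndSet of G \ h
  have hFfnd : ∀ v (hv : v ∈ F), ∃ hvc : v ∈ hᶜ, (⟨v, hvc⟩ : ↥hᶜ) ∈ FndSet (G.induce hᶜ) := by
    intro v hv
    have hvc : v ∈ hᶜ := hv h hh
    refine ⟨hvc, ?_⟩
    intro s hs hmem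
    exact hv _ (removable_union hh hs) (Or.inr ⟨_, hmem, rfl⟩)
  -- K1 : f maps F into F ∪ T
  have hK1 : ∀ v, v ∈ F → (f v : V) ∈ F ∪ T := by
    intro v hv
    have hfnd : f v ∈ FndSet (G.induce hᶜ) := (mem_fndSet_iff f v).mp hv
    by_cases hc : ∃ s, IsRemovable G s ∧ (f v : V) ∈ s
    · exact Or.inr ⟨hc, (f v).2, by simpa using hfnd⟩
    · push_neg at hc
      exact Or.inl (fun s hs => hc s hs)
  -- K2 : elements of F ∪ T are in hᶜ and in FndSet (G \ h)
  have hK2 : ∀ v, v ∈ F ∪ T → ∃ hvc : v ∈ hᶜ, (⟨v, hvc⟩ : ↥hᶜ) ∈ FndSet (G.induce hᶜ) := by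
    intro v hv
    rcases hv with hv | hv
    · exact hFfnd v hv
    · exact hv.2
  have hK2' : ∀ (y : ↥(F ∪ T)), f.symm ⟨y, (hK2 y y.2).choose⟩ ∈ F := by
    intro y
    rw [mem_fndSet_iff f]
    have : f (f.symm ⟨(y : V), (hK2 y y.2).choose⟩) = ⟨(y : V), (hK2 y y.2).choose⟩ :=
      f.apply_symm_apply _
    rw [this]
    exact (hK2 y y.2).choose_spec
  -- the isomorphism φ : G.induce F ≃g G.induce (F ∪ T)
  let φ : G.induce F ≃g G.induce (F ∪ T) :=
    { toFun := fun x => ⟨(f x : V), hK1 x x.2⟩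
      invFun := fun y => ⟨f.symm ⟨(y : V), (hK2 y y.2).choose⟩, hK2' y⟩
      left_inv := fun x => Subtype.ext (f.symm_apply_apply ↑x)
      right_inv := by
        intro y
        apply Subtype.ext
        show ((f (f.symm ⟨(y : V), (hK2 y y.2).choose⟩) : ↥hᶜ) : V) = (y : V)
        rw [f.apply_symm_apply]
      map_rel_iff' := by
        rintro ⟨a, ha⟩ ⟨b, hb⟩
        simp only [Equiv.coe_fn_mk, comap_adj, Embedding.coe_subtype]
        exact f.map_adj_iff }
  -- s₀
  let s₀ : Set ↥F := {x | (φ x : V) ∈ T}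
  have hs₀compl : ∀ x : ↥F, x ∈ s₀ᶜ ↔ (φ x : V) ∈ F := by
    intro x
    constructor
    · intro hx
      rcases (φ x).2 with hf | hf
      · exact hf
      · exact absurd hf hx
    · intro hx hxs
      exact hdisj _ hxs hx
  -- ψT : induced on s₀ ≅ G.induce T
  let ψT : (G.induce F).induce s₀ ≃g G.induce T :=
    { toFun := fun x => ⟨(φ x : V), x.2⟩
      invFun := fun y => ⟨φ.symm ⟨(y : V), Or.inr y.2⟩, by
        show (φ (φ.symm ⟨(y : V), Or.inr y.2⟩) : V) ∈ T
        rw [φ.apply_symm_apply]; exact y.2⟩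
      left_inv := fun x => Subtype.ext (φ.symm_apply_apply ↑x)
      right_inv := by
        intro y
        apply Subtype.ext
        show ((φ (φ.symm ⟨(y : V), Or.inr y.2⟩) : ↥(F ∪ T)) : V) = (y : V)
        rw [φ.apply_symm_apply]
      map_rel_iff' := by
        rintro ⟨a, ha⟩ ⟨b, hb⟩
        simp only [Equiv.coe_fn_mk, comap_adj, Embedding.coe_subtype]
        exact φ.map_adj_iff }
  -- ψF : induced on s₀ᶜ ≅ G.induce F
  let ψF : (G.induce F).induce s₀ᶜ ≃g G.induce F :=
    { toFun := fun x => ⟨(φ x : V), (hs₀compl x).mp x.2⟩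
      invFun := fun y => ⟨φ.symm ⟨(y : V), Or.inl y.2⟩, by
        rw [hs₀compl, φ.apply_symm_apply]; exact y.2⟩
      left_inv := fun x => Subtype.ext (φ.symm_apply_apply ↑x)
      right_inv := by
        intro y
        apply Subtype.ext
        show ((φ (φ.symm ⟨(y : V), Or.inl y.2⟩) : ↥(F ∪ T)) : V) = (y : V)
        rw [φ.apply_symm_apply]
      map_rel_iff' := by
        rintro ⟨a, ha⟩ ⟨b, hb⟩
        simp only [Equiv.coe_fn_mk, comap_adj, Embedding.coe_subtype]
        exact φ.map_adj_iff }
  -- an element of s₀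
  obtain ⟨y, hy⟩ := ht
  have hyFT : y ∈ F ∪ T := Or.inr hy
  have hx₀ : (φ.symm (⟨y, hyFT⟩ : ↥(F ∪ T))) ∈ s₀ := by
    show (φ (φ.symm (⟨y, hyFT⟩ : ↥(F ∪ T))) : V) ∈ T
    rw [φ.apply_symm_apply]; exact hy
  -- F is nonempty
  have hFne : ∃ x : ↥F, True := by
    have z := ψT.symm ⟨y, hy⟩
    exact ⟨(z : ↥F), trivial⟩
  obtain ⟨x₁, -⟩ := hFne
  -- an element of s₀ᶜ
  have hx₁ : φ.symm ⟨(x₁ : V), Or.inl x₁.2⟩ ∈ s₀ᶜ := by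
    rw [hs₀compl, φ.apply_symm_apply]; exact x₁.2
  refine ⟨⟨s₀ᶜ, ?_, ⟨ψF.symm⟩⟩, s₀, ⟨⟨_, hx₀⟩, ?_, ⟨ψF.symm⟩⟩, ⟨ψT⟩⟩
  · intro hcontra
    have : φ.symm (⟨y, hyFT⟩ : ↥(F ∪ T)) ∈ s₀ᶜ := hcontra ▸ Set.mem_univ _
    exact this hx₀
  · intro hcontra
    have : φ.symm ⟨(x₁ : V), Or.inl x₁.2⟩ ∈ s₀ := hcontra ▸ Set.mem_univ _
    exact hx₁ this
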